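/- arXiv:1811.12542 — 2 statements merged into one kernel-verified Lean document; each statement's English description precedes it below -/
import Mathlib

section
/- Let S ⊆ V and suppose its complement S^c is Λ-removable for some Λ > 0, i.e. Λ‖x‖₂ ≤ ‖Lx‖₂ for every x ∈ ℝ^N supported in S^c. Then for every ω with 0 < ω < Λ, the set S is a uniqueness set for PW_ω(G): if x, y ∈ PW_ω(G) satisfy x(v) = y(v) for all v ∈ S, then x = y. -/
open Finset Matrix

/-!
Expand `z = x - y ∈ PW_ω(G)` in the eigenbasis: its coefficients vanish above `ω` and the
eigenvalues are nonnegative, so `‖L z‖ ≤ ω ‖z‖` (Bernstein's inequality). Since `z` vanishes on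
`S`, removability of `Sᶜ` gives `Λ ‖z‖ ≤ ‖L z‖`, and `ω < Λ` forces `‖z‖ = 0`.
-/

variable {ι : Type*} [Fintype ι] [DecidableEq ι]

def paleyWiener (U : Matrix ι ι ℝ) (μ : ι → ℝ) (ω : ℝ) : Submodule ℝ (ι → ℝ) :=
  Submodule.span ℝ {u | ∃ ℓ, μ ℓ ≤ ω ∧ u = fun i => U i ℓ}

section Spectral

variable {U L : Matrix ι ι ℝ} {μ : ι → ℝ}

theorem sum_sq_mulVec_of_transpose_mul_self (hU : Uᵀ * U = 1) (d : ι → ℝ) :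
    ∑ v, (U *ᵥ d) v ^ 2 = ∑ ℓ, d ℓ ^ 2 := by
  have h : (U *ᵥ d) ⬝ᵥ (U *ᵥ d) = d ⬝ᵥ d := by
    rw [dotProduct_mulVec, ← mulVec_transpose, mulVec_mulVec, hU, one_mulVec]
  simpa only [dotProduct, sq] using h

theorem mul_eq_mul_diagonal_of_mulVec_col
    (heig : ∀ ℓ, L *ᵥ (fun i => U i ℓ) = μ ℓ • (fun i => U i ℓ)) :
    L * U = U * diagonal μ := by
  ext i ℓ
  rw [mul_diagonal, mul_comm]
  exact congrFun (heig ℓ) i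

theorem transpose_mulVec_apply_eq_zero_of_mem_paleyWiener (hU : Uᵀ * U = 1) {ω : ℝ}
    {w : ι → ℝ} (hw : w ∈ paleyWiener U μ ω) {ℓ : ι} (hℓ : ω < μ ℓ) : (Uᵀ *ᵥ w) ℓ = 0 := by
  induction hw using Submodule.span_induction with
  | mem w hw =>
    obtain ⟨k, hk, rfl⟩ := hw
    have hcol : (fun i => U i k) = U *ᵥ Pi.single k 1 := by
      rw [mulVec_single_one]; rfl
    have hne : ℓ ≠ k := by rintro rfl; exact hℓ.not_ge hk
    rw [hcol, mulVec_mulVec, hU, one_mulVec, Pi.single_eq_of_ne hne]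
  | zero => simp
  | add w₁ w₂ _ _ h₁ h₂ => simp [mulVec_add, h₁, h₂]
  | smul a w _ h => simp [mulVec_smul, h]

theorem sum_sq_mulVec_le_of_mem_paleyWiener (hU : Uᵀ * U = 1)
    (heig : ∀ ℓ, L *ᵥ (fun i => U i ℓ) = μ ℓ • (fun i => U i ℓ)) (hμ : ∀ ℓ, 0 ≤ μ ℓ)
    {ω : ℝ} {z : ι → ℝ} (hz : z ∈ paleyWiener U μ ω) :
    ∑ v, (L *ᵥ z) v ^ 2 ≤ ω ^ 2 * ∑ v, z v ^ 2 := by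
  set c := Uᵀ *ᵥ z
  have hzc : z = U *ᵥ c := by
    rw [mulVec_mulVec, mul_eq_one_comm.mp hU, one_mulVec]
  have hLz : L *ᵥ z = U *ᵥ (fun ℓ => μ ℓ * c ℓ) := by
    rw [hzc, mulVec_mulVec, mul_eq_mul_diagonal_of_mulVec_col heig, ← mulVec_mulVec]
    congr 1
    exact funext (mulVec_diagonal μ c)
  rw [hLz, hzc, sum_sq_mulVec_of_transpose_mul_self hU, sum_sq_mulVec_of_transpose_mul_self hU,
    mul_sum]
  refine sum_le_sum fun ℓ _ => ?_
  rcases le_or_gt (μ ℓ) ω with hle | hgt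
  · rw [mul_pow]
    exact mul_le_mul_of_nonneg_right (pow_le_pow_left₀ (hμ ℓ) hle 2) (sq_nonneg _)
  · simp [c, transpose_mulVec_apply_eq_zero_of_mem_paleyWiener hU hz hgt]

theorem eq_zero_of_mem_paleyWiener_of_mul_le (hU : Uᵀ * U = 1)
    (heig : ∀ ℓ, L *ᵥ (fun i => U i ℓ) = μ ℓ • (fun i => U i ℓ)) (hμ : ∀ ℓ, 0 ≤ μ ℓ)
    {ω Λ : ℝ} (hω : 0 ≤ ω) (hωΛ : ω < Λ) {z : ι → ℝ} (hz : z ∈ paleyWiener U μ ω)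
    (hzΛ : Λ * √(∑ v, z v ^ 2) ≤ √(∑ v, (L *ᵥ z) v ^ 2)) : z = 0 := by
  have hbern : √(∑ v, (L *ᵥ z) v ^ 2) ≤ ω * √(∑ v, z v ^ 2) := by
    calc √(∑ v, (L *ᵥ z) v ^ 2) ≤ √(ω ^ 2 * ∑ v, z v ^ 2) :=
          Real.sqrt_le_sqrt (sum_sq_mulVec_le_of_mem_paleyWiener hU heig hμ hz)
      _ = ω * √(∑ v, z v ^ 2) := by rw [Real.sqrt_mul (sq_nonneg ω), Real.sqrt_sq hω]
  have hnorm : √(∑ v, z v ^ 2) = 0 := by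
    nlinarith [Real.sqrt_nonneg (∑ v, z v ^ 2)]
  rw [Real.sqrt_eq_zero'] at hnorm
  refine dotProduct_self_eq_zero.mp (le_antisymm ?_ (sum_nonneg fun v _ => mul_self_nonneg (z v)))
  simpa only [dotProduct, sq] using hnorm

end Spectral

/-- Pesenson (Theorem 5.1): if the complement `Sᶜ` of a set `S` of vertices is `Λ`-removable
for some `Λ > 0`, then `S` is a uniqueness set for the Paley–Wiener space `PW_ω(G)`
whenever `0 < ω < Λ`. -/
theorem stmt_0 {N : ℕ} (hN : 2 ≤ N)
    (L : Matrix (Fin N) (Fin N) ℝ)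
    (μ : Fin N → ℝ) (U : Matrix (Fin N) (Fin N) ℝ)
    (hU : Uᵀ * U = 1)
    (hμmono : Monotone μ)
    (hμ0 : μ (⟨0, by omega⟩ : Fin N) = 0)
    (heig : ∀ ℓ, L.mulVec (fun i => U i ℓ) = μ ℓ • (fun i => U i ℓ))
    (S : Finset (Fin N)) (Λ : ℝ)
    (hrem : ∀ x : Fin N → ℝ, (∀ v ∈ S, x v = 0) →
      Λ * Real.sqrt (∑ v, x v ^ 2) ≤ Real.sqrt (∑ v, (L.mulVec x) v ^ 2))
    (ω : ℝ) (hω0 : 0 < ω) (hωΛ : ω < Λ)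
    (x y : Fin N → ℝ)
    (hx : x ∈ Submodule.span ℝ {u : Fin N → ℝ | ∃ ℓ, μ ℓ ≤ ω ∧ u = fun i => U i ℓ})
    (hy : y ∈ Submodule.span ℝ {u : Fin N → ℝ | ∃ ℓ, μ ℓ ≤ ω ∧ u = fun i => U i ℓ})
    (hagree : ∀ v ∈ S, x v = y v) :
    x = y := by
  have hμ : ∀ ℓ, 0 ≤ μ ℓ := fun ℓ => hμ0 ▸ hμmono (Nat.zero_le ℓ.val)
  have hxy : x - y ∈ paleyWiener U μ ω := Submodule.sub_mem _ hx hy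
  refine sub_eq_zero.mp (eq_zero_of_mem_paleyWiener_of_mul_le hU heig hμ hω0.le hωΛ hxy ?_)
  exact hrem _ fun v hv => sub_eq_zero.mpr (hagree v hv)
end

section
/- Let S ⊆ V, x ∈ ℝ^N, and write x = x₁ + x₂ where x₁ agrees with x on S^c and vanishes on S, and x₂ agrees with x on S and vanishes on S^c. Suppose S^c is Λ-removable (Λ‖x₁‖₂ ≤ ‖L x₁‖₂), suppose the Bernstein-type bound ‖L x₁‖₂ ≤ ω̃ ‖x‖₂ holds, and suppose 0 ≤ ω̃ < Λ. Then ‖x(S^c)‖₂² ≤ ((ω̃/Λ)² / (1 − (ω̃/Λ)²)) ‖x(S)‖₂², i.e. ‖x₁‖₂² ≤ ((ω̃/Λ)² / (1 − (ω̃/Λ)²)) ‖x₂‖₂². -/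
open Finset Matrix

/-- Stability theorem: write `x = x₁ + x₂` with `x₁` supported on `Sᶜ` agreeing with `x`
there and `x₂` supported on `S` agreeing with `x` there. If `Sᶜ` is `Λ`-removable, the
Bernstein bound `‖Lx₁‖₂ ≤ ω̃‖x‖₂` holds and `0 ≤ ω̃ < Λ`, then
`‖x(Sᶜ)‖₂² ≤ ((ω̃/Λ)²/(1-(ω̃/Λ)²)) ‖x(S)‖₂²`. -/
theorem stmt_11 {N : ℕ} (hN : 2 ≤ N)
    (W : Matrix (Fin N) (Fin N) ℝ)
    (hWsymm : W.IsSymm)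
    (hWnonneg : ∀ u v, 0 ≤ W u v)
    (hWdiag : ∀ u, W u u = 0)
    (L : Matrix (Fin N) (Fin N) ℝ)
    (hL : L = Matrix.diagonal (fun u => ∑ v, W u v) - W)
    (S : Finset (Fin N)) (x x₁ x₂ : Fin N → ℝ)
    (hsum : x = x₁ + x₂)
    (hx₁ : ∀ v ∈ Sᶜ, x₁ v = x v) (hx₁' : ∀ v ∈ S, x₁ v = 0)
    (hx₂ : ∀ v ∈ S, x₂ v = x v) (hx₂' : ∀ v ∈ Sᶜ, x₂ v = 0)
    (Λ ωt : ℝ)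
    (hrem : ∀ φ : Fin N → ℝ, (∀ v ∈ S, φ v = 0) →
      Λ * Real.sqrt (∑ v, φ v ^ 2) ≤ Real.sqrt (∑ v, (L.mulVec φ) v ^ 2))
    (hbern : Real.sqrt (∑ v, (L.mulVec x₁) v ^ 2) ≤ ωt * Real.sqrt (∑ v, x v ^ 2))
    (hωt : 0 ≤ ωt) (hωtΛ : ωt < Λ) :
    ∑ v ∈ Sᶜ, x v ^ 2 ≤ ((ωt / Λ) ^ 2 / (1 - (ωt / Λ) ^ 2)) * ∑ v ∈ S, x v ^ 2 := by
  set a := ∑ v ∈ Sᶜ, x v ^ 2 with ha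
  set b := ∑ v ∈ S, x v ^ 2 with hb
  have hΛ : 0 < Λ := lt_of_le_of_lt hωt hωtΛ
  have hann : 0 ≤ a := Finset.sum_nonneg fun v _ => sq_nonneg _
  have hbnn : 0 ≤ b := Finset.sum_nonneg fun v _ => sq_nonneg _
  have h1 : ∑ v, x₁ v ^ 2 = a := by
    rw [← Finset.sum_add_sum_compl S (fun v => x₁ v ^ 2)]
    have : ∑ v ∈ S, x₁ v ^ 2 = 0 :=
      Finset.sum_eq_zero fun v hv => by rw [hx₁' v hv]; ring
    rw [this, zero_add]
    exact Finset.sum_congr rfl fun v hv => by rw [hx₁ v hv]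
  have h2 : ∑ v, x v ^ 2 = b + a := by
    rw [← Finset.sum_add_sum_compl S (fun v => x v ^ 2)]
  have key : Λ * Real.sqrt a ≤ ωt * Real.sqrt (b + a) := by
    have := (hrem x₁ hx₁').trans hbern
    rwa [h1, h2] at this
  have hsq : Λ ^ 2 * a ≤ ωt ^ 2 * (b + a) := by
    have h3 : 0 ≤ Λ * Real.sqrt a := mul_nonneg hΛ.le (Real.sqrt_nonneg _)
    have := mul_self_le_mul_self h3 key
    have e1 : Real.sqrt a * Real.sqrt a = a := Real.mul_self_sqrt hann
    have e2 : Real.sqrt (b + a) * Real.sqrt (b + a) = b + a :=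
      Real.mul_self_sqrt (by linarith)
    nlinarith [this]
  have hden : 0 < 1 - (ωt / Λ) ^ 2 := by
    have : (ωt / Λ) ^ 2 < 1 := by
      have : 0 ≤ ωt / Λ := div_nonneg hωt hΛ.le
      have hlt : ωt / Λ < 1 := (div_lt_one hΛ).mpr hωtΛ
      nlinarith
    linarith
  rw [div_mul_eq_mul_div, le_div_iff₀ hden, div_pow]
  have hΛ2 : (0:ℝ) < Λ ^ 2 := by positivity
  rw [div_mul_eq_mul_div, le_div_iff₀ hΛ2]
  have : a * (1 - ωt ^ 2 / Λ ^ 2) * Λ ^ 2 = a * Λ ^ 2 - a * ωt ^ 2 := by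
    field_simp
  rw [this]
  nlinarith [hsq]
end
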